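/- arXiv:2408.11017 — 2 statements merged into one kernel-verified Lean document; each statement's English description precedes it below -/
import Mathlib

section
/- For the constructed elections: if G has an independent set I with |I| = k, then in E′ the committee S_I = {c_w : w ∈ I} satisfies λ-score^{E′}(S_I) = k·(ν+k)·t, and every size-k committee W ⊆ C with W ∩ D ≠ ∅ satisfies λ-score^{E′}(W) < λ-score^{E′}(S_I); consequently every λ-score-maximizing size-k committee in E′ is disjoint from D. -/
open Finset

variable {V : Type*}

/-- Ballot of an edge voter corresponding to an edge of the graph. -/
def edgeBallot [DecidableEq V] (k : ℕ) (e : Sym2 V) : Finset (V ⊕ Fin k) :=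
  Sym2.lift ⟨fun u w => ({Sum.inl u, Sum.inl w} : Finset (V ⊕ Fin k)),
    fun u w => Finset.pair_comm (Sum.inl u) (Sum.inl w)⟩ e

/-- The election E of the hardness construction, given as a multiset of approval ballots:
for each edge `{u,w}` there are `t` voters with ballot `{c_u, c_w}`; for each vertex `w`
there are `(ν − deg w)·t` voters with ballot `{c_w}`; for each pair `(d, c_w)` there are
`t` voters with ballot `{d, c_w}`; for each dummy `d` there are `k·t` voters with ballot `{d}`. -/
def electionE [Fintype V] [DecidableEq V] (G : SimpleGraph V) [DecidableRel G.Adj]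
    (k t : ℕ) : Multiset (Finset (V ⊕ Fin k)) :=
  (G.edgeFinset.val.bind fun e => Multiset.replicate t (edgeBallot k e))
  + ((Finset.univ : Finset V).val.bind fun w =>
      Multiset.replicate ((Fintype.card V - G.degree w) * t)
        ({Sum.inl w} : Finset (V ⊕ Fin k)))
  + ((Finset.univ : Finset (Fin k × V)).val.bind fun p =>
      Multiset.replicate t ({Sum.inr p.1, Sum.inl p.2} : Finset (V ⊕ Fin k)))
  + ((Finset.univ : Finset (Fin k)).val.bind fun d =>
      Multiset.replicate (k * t) ({Sum.inr d} : Finset (V ⊕ Fin k)))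

/-- The election E′: one voter with ballot `{d*, c_{w*}}` has `d*` deleted from the ballot. -/
def electionE' [Fintype V] [DecidableEq V] (G : SimpleGraph V) [DecidableRel G.Adj]
    (k t : ℕ) (dstar : Fin k) (wstar : V) : Multiset (Finset (V ⊕ Fin k)) :=
  ({Sum.inl wstar} : Finset (V ⊕ Fin k)) ::ₘ
    (electionE G k t).erase ({Sum.inr dstar, Sum.inl wstar} : Finset (V ⊕ Fin k))

/-- λ-score of a committee `W` in an election given as a multiset of ballots. -/
noncomputable def lamScoreM {α : Type*} [DecidableEq α] (lam : ℕ → ℝ)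
    (E : Multiset (Finset α)) (W : Finset α) : ℝ :=
  (E.map fun b => ∑ j ∈ Finset.range ((W ∩ b).card), lam (j + 1)).sum


section Aux

variable {α : Type*} [DecidableEq α]

/-- per-ballot score -/
noncomputable def phiB (lam : ℕ → ℝ) (W b : Finset α) : ℝ :=
  ∑ j ∈ Finset.range ((W ∩ b).card), lam (j + 1)

lemma lamScoreM_add' (lam : ℕ → ℝ) (E1 E2 : Multiset (Finset α)) (W : Finset α) :
    lamScoreM lam (E1 + E2) W = lamScoreM lam E1 W + lamScoreM lam E2 W := by
  simp [lamScoreM]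

lemma lamScoreM_cons' (lam : ℕ → ℝ) (b : Finset α) (E : Multiset (Finset α)) (W : Finset α) :
    lamScoreM lam (b ::ₘ E) W = phiB lam W b + lamScoreM lam E W := by
  simp [lamScoreM, phiB]

lemma lamScoreM_erase' (lam : ℕ → ℝ) {b : Finset α} {E : Multiset (Finset α)} (hb : b ∈ E)
    (W : Finset α) :
    lamScoreM lam (E.erase b) W = lamScoreM lam E W - phiB lam W b := by
  conv_rhs => rw [← Multiset.cons_erase hb]
  rw [lamScoreM_cons']; ring

lemma lamScoreM_bind_replicate (lam : ℕ → ℝ) {ι : Type*} (s : Finset ι) (n : ι → ℕ)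
    (f : ι → Finset α) (W : Finset α) :
    lamScoreM lam (s.val.bind fun x => Multiset.replicate (n x) (f x)) W
      = ∑ x ∈ s, (n x : ℝ) * phiB lam W (f x) := by
  simp only [lamScoreM, Multiset.map_bind, Multiset.map_replicate, Multiset.sum_bind,
    Multiset.sum_replicate, nsmul_eq_mul]
  rfl

lemma card_inter_singleton (W : Finset α) (c : α) :
    (W ∩ ({c} : Finset α)).card = if c ∈ W then 1 else 0 := by
  split_ifs with h
  · rw [Finset.inter_singleton_of_mem h, Finset.card_singleton]
  · rw [Finset.inter_singleton_of_notMem h, Finset.card_empty]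

lemma card_inter_pair (W : Finset α) {x y : α} (hxy : x ≠ y) :
    (W ∩ ({x, y} : Finset α)).card
      = (if x ∈ W then 1 else 0) + (if y ∈ W then 1 else 0) := by
  have : W ∩ ({x, y} : Finset α) = ({x, y} : Finset α).filter (· ∈ W) := by
    ext z; simp [and_comm]
  rw [this, Finset.filter_insert, Finset.filter_singleton]
  split_ifs with h1 h2 h2 <;>
    simp [Finset.card_insert_of_notMem, Finset.mem_singleton, hxy]

section vals
variable (lam : ℕ → ℝ)

lemma phiB_singleton (hlam1 : lam 1 = 1) (W : Finset α) (c : α) :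
    phiB lam W ({c} : Finset α) = if c ∈ W then 1 else 0 := by
  rw [phiB, card_inter_singleton]
  split_ifs <;> simp [hlam1]

lemma phiB_pair (hlam1 : lam 1 = 1) (W : Finset α) {x y : α} (hxy : x ≠ y) :
    phiB lam W ({x, y} : Finset α)
      = (if x ∈ W then 1 else 0) + (if y ∈ W then 1 else 0)
        + (if x ∈ W then 1 else 0) * (if y ∈ W then 1 else 0) * (lam 2 - 1) := by
  rw [phiB, card_inter_pair W hxy]
  split_ifs <;> simp [Finset.sum_range_succ, hlam1]

lemma phiB_nonneg (h0 : ∀ i : ℕ, 1 ≤ i → 0 ≤ lam i) (W b : Finset α) :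
    0 ≤ phiB lam W b :=
  Finset.sum_nonneg fun j _ => h0 (j + 1) (Nat.le_add_left 1 j)

lemma phiB_le_card (h1 : ∀ i : ℕ, 1 ≤ i → lam i ≤ 1) (W b : Finset α) :
    phiB lam W b ≤ ((W ∩ b).card : ℝ) := by
  calc phiB lam W b ≤ ∑ _j ∈ Finset.range ((W ∩ b).card), (1 : ℝ) :=
        Finset.sum_le_sum fun j _ => h1 (j + 1) (Nat.le_add_left 1 j)
    _ = ((W ∩ b).card : ℝ) := by simp

end vals

end Aux

section Score

variable {V : Type*} [Fintype V] [DecidableEq V]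

lemma score_electionE (G : SimpleGraph V) [DecidableRel G.Adj] (k t : ℕ) (lam : ℕ → ℝ)
    (W : Finset (V ⊕ Fin k)) :
    lamScoreM lam (electionE G k t) W
      = (∑ e ∈ G.edgeFinset, (t : ℝ) * phiB lam W (edgeBallot k e))
        + (∑ w : V, (((Fintype.card V - G.degree w) * t : ℕ) : ℝ) * phiB lam W {Sum.inl w})
        + (∑ p : Fin k × V, (t : ℝ) * phiB lam W {Sum.inr p.1, Sum.inl p.2})
        + (∑ d : Fin k, ((k * t : ℕ) : ℝ) * phiB lam W {Sum.inr d}) := by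
  rw [electionE, lamScoreM_add', lamScoreM_add', lamScoreM_add',
    lamScoreM_bind_replicate, lamScoreM_bind_replicate, lamScoreM_bind_replicate,
    lamScoreM_bind_replicate]

lemma pair_mem_electionE (G : SimpleGraph V) [DecidableRel G.Adj] {k t : ℕ} (ht : 1 ≤ t)
    (d : Fin k) (w : V) :
    ({Sum.inr d, Sum.inl w} : Finset (V ⊕ Fin k)) ∈ electionE G k t := by
  rw [electionE]
  refine Multiset.mem_add.2 (Or.inl (Multiset.mem_add.2 (Or.inr (Multiset.mem_bind.2 ?_))))
  exact ⟨(d, w), by simp, Multiset.mem_replicate.2 ⟨by omega, rfl⟩⟩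

lemma score_electionE' (G : SimpleGraph V) [DecidableRel G.Adj] {k t : ℕ} (ht : 1 ≤ t)
    (dstar : Fin k) (wstar : V) (lam : ℕ → ℝ) (W : Finset (V ⊕ Fin k)) :
    lamScoreM lam (electionE' G k t dstar wstar) W
      = lamScoreM lam (electionE G k t) W + phiB lam W {Sum.inl wstar}
        - phiB lam W {Sum.inr dstar, Sum.inl wstar} := by
  rw [electionE', lamScoreM_cons', lamScoreM_erase' lam (pair_mem_electionE G ht dstar wstar)]
  ring

end Score

section Graph

variable {V : Type*} [Fintype V] [DecidableEq V]

lemma card_inter_edgeBallot {k : ℕ} (G : SimpleGraph V) [DecidableRel G.Adj]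
    (W : Finset (V ⊕ Fin k)) {e : Sym2 V} (he : e ∈ G.edgeFinset) :
    ((W ∩ edgeBallot k e).card : ℝ)
      = ∑ z ∈ Finset.univ.filter (fun w => Sum.inl w ∈ W),
          (if z ∈ e then (1 : ℝ) else 0) := by
  induction e using Sym2.ind with
  | _ u w =>
    rw [SimpleGraph.mem_edgeFinset, SimpleGraph.mem_edgeSet] at he
    have hne : u ≠ w := he.ne
    have hb : edgeBallot k s(u, w) = {Sum.inl u, Sum.inl w} := rfl
    rw [hb, card_inter_pair W (by simp [hne] : (Sum.inl u : V ⊕ Fin k) ≠ Sum.inl w)]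
    have hsplit : ∀ z : V, (if z ∈ s(u, w) then (1 : ℝ) else 0)
        = (if z = u then (1 : ℝ) else 0) + (if z = w then (1 : ℝ) else 0) := by
      intro z
      by_cases h1 : z = u <;> by_cases h2 : z = w <;> simp_all [Sym2.mem_iff]
    rw [Finset.sum_congr rfl fun z _ => hsplit z, Finset.sum_add_distrib,
      Finset.sum_ite_eq', Finset.sum_ite_eq']
    simp [Finset.mem_filter]

lemma sum_edge_indicator (G : SimpleGraph V) [DecidableRel G.Adj] (A : Finset V) :
    ∑ e ∈ G.edgeFinset, ∑ z ∈ A, (if z ∈ e then (1 : ℝ) else 0)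
      = ∑ z ∈ A, (G.degree z : ℝ) := by
  rw [Finset.sum_comm]
  refine Finset.sum_congr rfl fun z _ => ?_
  rw [Finset.sum_boole, ← SimpleGraph.incidenceFinset_eq_filter,
    SimpleGraph.card_incidenceFinset_eq_degree]

end Graph

section Main

variable {V : Type*} [Fintype V] [DecidableEq V]

lemma indicator_sum_fin {k : ℕ} (B : Finset (Fin k)) :
    ∑ d : Fin k, (if d ∈ B then (1 : ℝ) else 0) = B.card := by
  rw [Finset.sum_boole]
  congr 1
  rw [Finset.filter_mem_eq_inter, Finset.univ_inter]

lemma indicator_sum_V (A : Finset V) :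
    ∑ w : V, (if w ∈ A then (1 : ℝ) else 0) = A.card := by
  rw [Finset.sum_boole]
  congr 1
  rw [Finset.filter_mem_eq_inter, Finset.univ_inter]

lemma scoreE_SI (G : SimpleGraph V) [DecidableRel G.Adj] (k t : ℕ)
    (lam : ℕ → ℝ) (hlam1 : lam 1 = 1)
    (I : Finset V) (hIindep : ∀ u ∈ I, ∀ w ∈ I, ¬ G.Adj u w) :
    lamScoreM lam (electionE G k t) (I.image Sum.inl)
      = ((Fintype.card V : ℝ) + k) * I.card * t := by
  set S : Finset (V ⊕ Fin k) := I.image Sum.inl with hS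
  have hmemL : ∀ v : V, (Sum.inl v ∈ S ↔ v ∈ I) := by intro v; simp [hS]
  have hmemR : ∀ d : Fin k, (Sum.inr d : V ⊕ Fin k) ∉ S := by intro d; simp [hS]
  have hfilter : (Finset.univ.filter fun w => Sum.inl w ∈ S) = I := by
    ext z; simp [hmemL]
  rw [score_electionE]
  -- edge term
  have hedge : ∀ e ∈ G.edgeFinset, phiB lam S (edgeBallot k e) = ((S ∩ edgeBallot k e).card : ℝ) := by
    intro e he
    induction e using Sym2.ind with
    | _ u w =>
      rw [SimpleGraph.mem_edgeFinset, SimpleGraph.mem_edgeSet] at he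
      have hne : (Sum.inl u : V ⊕ Fin k) ≠ Sum.inl w := by simp [he.ne]
      have hb : edgeBallot k s(u, w) = {Sum.inl u, Sum.inl w} := rfl
      rw [hb, phiB_pair lam hlam1 S hne, card_inter_pair S hne]
      have : ¬ (Sum.inl u ∈ S ∧ Sum.inl w ∈ S) := by
        rw [hmemL, hmemL]
        intro ⟨h1, h2⟩; exact hIindep u h1 w h2 he
      push_cast
      split_ifs with h1 h2 <;> simp_all
  have hterm1 : ∑ e ∈ G.edgeFinset, (t : ℝ) * phiB lam S (edgeBallot k e)
      = (t : ℝ) * ∑ z ∈ I, (G.degree z : ℝ) := by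
    rw [← Finset.mul_sum]
    congr 1
    rw [Finset.sum_congr rfl fun e he => (hedge e he).trans (card_inter_edgeBallot G S he),
      hfilter, sum_edge_indicator]
  -- vertex term
  have hterm2 : ∑ w : V, (((Fintype.card V - G.degree w) * t : ℕ) : ℝ) * phiB lam S {Sum.inl w}
      = ∑ w ∈ I, (((Fintype.card V - G.degree w) * t : ℕ) : ℝ) := by
    have hv : ∀ w : V, phiB lam S {Sum.inl w} = if w ∈ I then (1 : ℝ) else 0 := fun w => by
      rw [phiB_singleton lam hlam1]; simp [hmemL]
    simp only [hv, mul_ite, mul_one, mul_zero]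
    rw [Finset.sum_ite_mem, Finset.univ_inter]
  -- pair term
  have hterm3 : ∑ p : Fin k × V, (t : ℝ) * phiB lam S {Sum.inr p.1, Sum.inl p.2}
      = (t : ℝ) * (k * I.card) := by
    have hp : ∀ p : Fin k × V, phiB lam S {Sum.inr p.1, Sum.inl p.2}
        = (if p.2 ∈ I then (1 : ℝ) else 0) := by
      intro p
      rw [phiB_pair lam hlam1 S (by simp)]
      simp [hmemR, hmemL]
    rw [Finset.sum_congr rfl fun p _ => by rw [hp p]]
    rw [← Finset.mul_sum, Fintype.sum_prod_type]
    simp only [indicator_sum_V]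
    rw [Finset.sum_const, Finset.card_univ, Fintype.card_fin]
    push_cast
    ring
  -- dummy term
  have hterm4 : ∑ d : Fin k, ((k * t : ℕ) : ℝ) * phiB lam S {Sum.inr d} = 0 := by
    refine Finset.sum_eq_zero fun d _ => ?_
    rw [phiB_singleton lam hlam1]
    simp [hmemR]
  rw [hterm1, hterm2, hterm3, hterm4]
  have hcombine : (t : ℝ) * ∑ z ∈ I, (G.degree z : ℝ)
      + ∑ w ∈ I, (((Fintype.card V - G.degree w) * t : ℕ) : ℝ)
      = (Fintype.card V : ℝ) * I.card * t := by
    rw [Finset.mul_sum, ← Finset.sum_add_distrib]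
    have hw : ∀ w ∈ I, (t : ℝ) * (G.degree w : ℝ)
        + (((Fintype.card V - G.degree w) * t : ℕ) : ℝ) = (Fintype.card V : ℝ) * t := by
      intro w _
      rw [Nat.cast_mul, Nat.cast_sub (G.degree_lt_card_verts w).le]
      ring
    rw [Finset.sum_congr rfl hw, Finset.sum_const, nsmul_eq_mul]
    ring
  rw [hcombine]
  ring

end Main

section Bound

variable {V : Type*} [Fintype V] [DecidableEq V]

lemma scoreE_W_le (G : SimpleGraph V) [DecidableRel G.Adj] (k t : ℕ)
    (lam : ℕ → ℝ) (hlam1 : lam 1 = 1)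
    (hlam01 : ∀ i : ℕ, 1 ≤ i → lam i ∈ Set.Icc (0 : ℝ) 1)
    (W : Finset (V ⊕ Fin k)) :
    lamScoreM lam (electionE G k t) W
      ≤ (t : ℝ) * (((Fintype.card V : ℝ) + k)
            * ((Finset.univ.filter fun w => Sum.inl w ∈ W).card
              + (Finset.univ.filter fun d => Sum.inr d ∈ W).card)
          - (1 - lam 2) * (Finset.univ.filter fun w => Sum.inl w ∈ W).card
              * (Finset.univ.filter fun d => Sum.inr d ∈ W).card) := by
  set A : Finset V := Finset.univ.filter fun w => Sum.inl w ∈ W with hA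
  set B : Finset (Fin k) := Finset.univ.filter fun d => Sum.inr d ∈ W with hB
  have hmemA : ∀ v : V, ((Sum.inl v : V ⊕ Fin k) ∈ W ↔ v ∈ A) := by intro v; simp [hA]
  have hmemB : ∀ d : Fin k, ((Sum.inr d : V ⊕ Fin k) ∈ W ↔ d ∈ B) := by intro d; simp [hB]
  rw [score_electionE]
  -- edge term bound
  have hterm1 : ∑ e ∈ G.edgeFinset, (t : ℝ) * phiB lam W (edgeBallot k e)
      ≤ (t : ℝ) * ∑ z ∈ A, (G.degree z : ℝ) := by
    rw [← Finset.mul_sum]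
    refine mul_le_mul_of_nonneg_left ?_ (Nat.cast_nonneg t)
    calc ∑ e ∈ G.edgeFinset, phiB lam W (edgeBallot k e)
        ≤ ∑ e ∈ G.edgeFinset, ((W ∩ edgeBallot k e).card : ℝ) :=
          Finset.sum_le_sum fun e _ =>
            phiB_le_card lam (fun i hi => (hlam01 i hi).2) W (edgeBallot k e)
      _ = ∑ e ∈ G.edgeFinset, ∑ z ∈ A, (if z ∈ e then (1 : ℝ) else 0) :=
          Finset.sum_congr rfl fun e he => card_inter_edgeBallot G W he
      _ = ∑ z ∈ A, (G.degree z : ℝ) := sum_edge_indicator G A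
  -- vertex term (exact)
  have hterm2 : ∑ w : V, (((Fintype.card V - G.degree w) * t : ℕ) : ℝ) * phiB lam W {Sum.inl w}
      = ∑ w ∈ A, (((Fintype.card V - G.degree w) * t : ℕ) : ℝ) := by
    have hv : ∀ w : V, phiB lam W {Sum.inl w} = if w ∈ A then (1 : ℝ) else 0 := fun w => by
      rw [phiB_singleton lam hlam1]; simp [hmemA]
    simp only [hv, mul_ite, mul_one, mul_zero]
    rw [Finset.sum_ite_mem, Finset.univ_inter]
  -- pair term (exact)
  have hterm3 : ∑ p : Fin k × V, (t : ℝ) * phiB lam W {Sum.inr p.1, Sum.inl p.2}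
      = (t : ℝ) * ((Fintype.card V : ℝ) * B.card + (k : ℝ) * A.card
          + B.card * A.card * (lam 2 - 1)) := by
    have hp : ∀ p : Fin k × V, phiB lam W {Sum.inr p.1, Sum.inl p.2}
        = (if p.1 ∈ B then (1 : ℝ) else 0) + (if p.2 ∈ A then (1 : ℝ) else 0)
          + (if p.1 ∈ B then (1 : ℝ) else 0) * (if p.2 ∈ A then (1 : ℝ) else 0)
            * (lam 2 - 1) := by
      intro p
      rw [phiB_pair lam hlam1 W (by simp)]
      simp only [hmemB, hmemA]
    rw [← Finset.mul_sum]
    congr 1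
    simp only [hp]
    rw [Finset.sum_add_distrib, Finset.sum_add_distrib]
    have h1 : ∑ p : Fin k × V, (if p.1 ∈ B then (1 : ℝ) else 0)
        = (Fintype.card V : ℝ) * B.card := by
      rw [Fintype.sum_prod_type]
      have hc : ∀ d : Fin k, ∑ _w : V, (if d ∈ B then (1 : ℝ) else 0)
          = (Fintype.card V : ℝ) * (if d ∈ B then (1 : ℝ) else 0) := fun d => by
        rw [Finset.sum_const, Finset.card_univ, nsmul_eq_mul]
      rw [Finset.sum_congr rfl fun d _ => hc d, ← Finset.mul_sum, indicator_sum_fin]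
    have h2 : ∑ p : Fin k × V, (if p.2 ∈ A then (1 : ℝ) else 0) = (k : ℝ) * A.card := by
      rw [Fintype.sum_prod_type]
      simp only [indicator_sum_V]
      rw [Finset.sum_const, Finset.card_univ, Fintype.card_fin, nsmul_eq_mul]
    have h3 : ∑ p : Fin k × V,
        (if p.1 ∈ B then (1 : ℝ) else 0) * (if p.2 ∈ A then (1 : ℝ) else 0) * (lam 2 - 1)
        = (B.card : ℝ) * A.card * (lam 2 - 1) := by
      rw [← Finset.sum_mul]
      congr 1
      rw [Fintype.sum_prod_type]
      have hbb : ∑ x : Fin k, ∑ y : V,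
          (if x ∈ B then (1 : ℝ) else 0) * (if y ∈ A then (1 : ℝ) else 0)
          = (B.card : ℝ) * A.card := by
        rw [← Fintype.sum_mul_sum, indicator_sum_fin, indicator_sum_V]
      exact hbb
    rw [h1, h2, h3]
  -- dummy term (exact)
  have hterm4 : ∑ d : Fin k, ((k * t : ℕ) : ℝ) * phiB lam W {Sum.inr d}
      = ((k * t : ℕ) : ℝ) * B.card := by
    have hd : ∀ d : Fin k, phiB lam W {Sum.inr d} = if d ∈ B then (1 : ℝ) else 0 := fun d => by
      rw [phiB_singleton lam hlam1]; simp [hmemB]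
    simp only [hd]
    rw [← Finset.mul_sum, indicator_sum_fin]
  have hterm12 : (t : ℝ) * ∑ z ∈ A, (G.degree z : ℝ)
      + ∑ w ∈ A, (((Fintype.card V - G.degree w) * t : ℕ) : ℝ)
      = (Fintype.card V : ℝ) * A.card * t := by
    rw [Finset.mul_sum, ← Finset.sum_add_distrib]
    have hw : ∀ w ∈ A, (t : ℝ) * (G.degree w : ℝ)
        + (((Fintype.card V - G.degree w) * t : ℕ) : ℝ) = (Fintype.card V : ℝ) * t := by
      intro w _
      rw [Nat.cast_mul, Nat.cast_sub (G.degree_lt_card_verts w).le]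
      ring
    rw [Finset.sum_congr rfl hw, Finset.sum_const, nsmul_eq_mul]
    ring
  calc ∑ e ∈ G.edgeFinset, (t : ℝ) * phiB lam W (edgeBallot k e)
        + ∑ w : V, (((Fintype.card V - G.degree w) * t : ℕ) : ℝ) * phiB lam W {Sum.inl w}
        + ∑ p : Fin k × V, (t : ℝ) * phiB lam W {Sum.inr p.1, Sum.inl p.2}
        + ∑ d : Fin k, ((k * t : ℕ) : ℝ) * phiB lam W {Sum.inr d}
      ≤ ((t : ℝ) * ∑ z ∈ A, (G.degree z : ℝ)
          + ∑ w ∈ A, (((Fintype.card V - G.degree w) * t : ℕ) : ℝ))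
        + ∑ p : Fin k × V, (t : ℝ) * phiB lam W {Sum.inr p.1, Sum.inl p.2}
        + ∑ d : Fin k, ((k * t : ℕ) : ℝ) * phiB lam W {Sum.inr d} := by
        rw [hterm2]; linarith [hterm1]
    _ = (Fintype.card V : ℝ) * A.card * t
        + (t : ℝ) * ((Fintype.card V : ℝ) * B.card + (k : ℝ) * A.card
            + B.card * A.card * (lam 2 - 1))
        + ((k * t : ℕ) : ℝ) * B.card := by rw [hterm12, hterm3, hterm4]
    _ = (t : ℝ) * (((Fintype.card V : ℝ) + k) * ((A.card : ℝ) + B.card)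
          - (1 - lam 2) * A.card * B.card) := by push_cast; ring

end Bound

lemma card_filter_sum {V : Type*} [Fintype V] [DecidableEq V] {k : ℕ}
    (W : Finset (V ⊕ Fin k)) :
    (Finset.univ.filter fun w => Sum.inl w ∈ W).card
      + (Finset.univ.filter fun d => Sum.inr d ∈ W).card = W.card := by
  have hU : (Finset.univ.filter fun w => Sum.inl w ∈ W).image (Sum.inl : V → V ⊕ Fin k)
      ∪ (Finset.univ.filter fun d => Sum.inr d ∈ W).image Sum.inr = W := by
    ext x; cases x <;> simp
  have hdisj : Disjoint
      ((Finset.univ.filter fun w => Sum.inl w ∈ W).image (Sum.inl : V → V ⊕ Fin k))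
      ((Finset.univ.filter fun d => Sum.inr d ∈ W).image Sum.inr) := by
    simp [Finset.disjoint_left]
  have h1 : (Finset.univ.filter fun w => Sum.inl w ∈ W).card
      = ((Finset.univ.filter fun w => Sum.inl w ∈ W).image (Sum.inl : V → V ⊕ Fin k)).card :=
    (Finset.card_image_of_injective _ Sum.inl_injective).symm
  have h2 : (Finset.univ.filter fun d => Sum.inr d ∈ W).card
      = ((Finset.univ.filter fun d => Sum.inr d ∈ W).image (Sum.inr : Fin k → V ⊕ Fin k)).card :=
    (Finset.card_image_of_injective _ Sum.inr_injective).symm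
  rw [h1, h2, ← Finset.card_union_of_disjoint hdisj, hU]
/-- If G has an independent set I of size k, then in E′ the committee
`S_I = {c_w : w ∈ I}` has λ-score `k·(ν+k)·t`, every size-k committee meeting D has
strictly smaller λ-score, and consequently every λ-score-maximizing size-k committee
in E′ is disjoint from D. -/
theorem stmt1 [Fintype V] [DecidableEq V] (G : SimpleGraph V) [DecidableRel G.Adj]
    (k : ℕ) (hk : 1 ≤ k) (hV : 1 ≤ Fintype.card V)
    (lam : ℕ → ℝ) (hlam1 : lam 1 = 1)
    (hlam01 : ∀ i : ℕ, 1 ≤ i → lam i ∈ Set.Icc (0 : ℝ) 1)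
    (hmono : ∀ i j : ℕ, 1 ≤ i → i ≤ j → lam j ≤ lam i)
    (hud : lam 2 < 1)
    (t : ℕ) (ht : t = ⌈(2 : ℝ) / (1 - lam 2)⌉₊)
    (dstar : Fin k) (wstar : V)
    (I : Finset V) (hIcard : I.card = k)
    (hIindep : ∀ u ∈ I, ∀ w ∈ I, ¬ G.Adj u w) :
    lamScoreM lam (electionE' G k t dstar wstar) (I.image (Sum.inl : V → V ⊕ Fin k))
      = (k : ℝ) * ((Fintype.card V : ℝ) + k) * t ∧
    (∀ W : Finset (V ⊕ Fin k), W.card = k →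
        (W ∩ (Finset.univ : Finset (Fin k)).image (Sum.inr : Fin k → V ⊕ Fin k)).Nonempty →
        lamScoreM lam (electionE' G k t dstar wstar) W <
          lamScoreM lam (electionE' G k t dstar wstar)
            (I.image (Sum.inl : V → V ⊕ Fin k))) ∧
    (∀ W : Finset (V ⊕ Fin k), W.card = k →
        (∀ W' : Finset (V ⊕ Fin k), W'.card = k →
          lamScoreM lam (electionE' G k t dstar wstar) W' ≤
            lamScoreM lam (electionE' G k t dstar wstar) W) →
        W ∩ (Finset.univ : Finset (Fin k)).image (Sum.inr : Fin k → V ⊕ Fin k) = ∅) := by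

  -- basic facts about lam and t
  have hα0 : 0 ≤ lam 2 := (hlam01 2 (by norm_num)).1
  have h1mα : 0 < 1 - lam 2 := by linarith
  have ht1 : 1 ≤ t := by
    rw [ht]
    exact Nat.ceil_pos.mpr (div_pos (by norm_num) h1mα)
  set ν : ℕ := Fintype.card V with hν
  -- Part 1
  have hpart1 : lamScoreM lam (electionE' G k t dstar wstar)
      (I.image (Sum.inl : V → V ⊕ Fin k)) = (k : ℝ) * ((ν : ℝ) + k) * t := by
    rw [score_electionE' G ht1 dstar wstar lam, scoreE_SI G k t lam hlam1 I hIindep, hIcard]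
    have hphi1 : phiB lam (I.image Sum.inl) ({Sum.inl wstar} : Finset (V ⊕ Fin k))
        = if wstar ∈ I then (1 : ℝ) else 0 := by
      rw [phiB_singleton lam hlam1]; simp
    have hphi2 : phiB lam (I.image Sum.inl)
        ({Sum.inr dstar, Sum.inl wstar} : Finset (V ⊕ Fin k))
        = if wstar ∈ I then (1 : ℝ) else 0 := by
      rw [phiB_pair lam hlam1 _ (by simp)]; simp
    rw [hphi1, hphi2]
    ring
  -- Part 2
  have hpart2 : ∀ W : Finset (V ⊕ Fin k), W.card = k →
      (W ∩ (Finset.univ : Finset (Fin k)).image (Sum.inr : Fin k → V ⊕ Fin k)).Nonempty →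
      lamScoreM lam (electionE' G k t dstar wstar) W <
        lamScoreM lam (electionE' G k t dstar wstar)
          (I.image (Sum.inl : V → V ⊕ Fin k)) := by
    intro W hWcard hWD
    rw [hpart1]
    set A : Finset V := Finset.univ.filter fun w => Sum.inl w ∈ W with hA
    set B : Finset (Fin k) := Finset.univ.filter fun d => Sum.inr d ∈ W with hB
    have hab : A.card + B.card = k := by rw [hA, hB, card_filter_sum, hWcard]
    have hb1 : 1 ≤ B.card := by
      obtain ⟨x, hx⟩ := hWD
      rw [Finset.mem_inter] at hx
      obtain ⟨d, _, rfl⟩ := Finset.mem_image.1 hx.2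
      exact Finset.card_pos.2 ⟨d, by simp [hB, hx.1]⟩
    have hbound := scoreE_W_le G k t lam hlam1 hlam01 W
    rw [← hA, ← hB, ← hν] at hbound
    have habR : (A.card : ℝ) + B.card = k := by exact_mod_cast hab
    have hb1R : (1 : ℝ) ≤ B.card := by exact_mod_cast hb1
    have ht1R : (1 : ℝ) ≤ t := by exact_mod_cast ht1
    have hE' := score_electionE' G ht1 dstar wstar lam W
    have hphiw : phiB lam W ({Sum.inl wstar} : Finset (V ⊕ Fin k))
        = if wstar ∈ A then (1 : ℝ) else 0 := by
      rw [phiB_singleton lam hlam1]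
      simp [hA]
    have hphip : phiB lam W ({Sum.inr dstar, Sum.inl wstar} : Finset (V ⊕ Fin k))
        = (if dstar ∈ B then (1 : ℝ) else 0) + (if wstar ∈ A then (1 : ℝ) else 0)
          + (if dstar ∈ B then (1 : ℝ) else 0) * (if wstar ∈ A then (1 : ℝ) else 0)
            * (lam 2 - 1) := by
      rw [phiB_pair lam hlam1 W (by simp)]
      simp [hA, hB]
    by_cases hA0 : A.card = 0
    · -- all-dummy committee: W = D, so dstar ∈ W and wstar ∉ A
      have hBk : B = Finset.univ := by
        apply Finset.eq_univ_of_card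
        rw [Fintype.card_fin]
        omega
      have hdB : dstar ∈ B := hBk ▸ Finset.mem_univ dstar
      have hwA : wstar ∉ A := by
        have : A = ∅ := Finset.card_eq_zero.1 hA0
        simp [this]
      rw [hE', hphiw, hphip, if_pos hdB, if_neg hwA]
      have hA0R : (A.card : ℝ) = 0 := by exact_mod_cast hA0
      have hbound' : lamScoreM lam (electionE G k t) W ≤ (k : ℝ) * ((ν : ℝ) + k) * t := by
        calc lamScoreM lam (electionE G k t) W
            ≤ (t : ℝ) * (((ν : ℝ) + k) * ((A.card : ℝ) + B.card)
                - (1 - lam 2) * A.card * B.card) := hbound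
          _ = (k : ℝ) * ((ν : ℝ) + k) * t := by rw [habR, hA0R]; ring
      linarith
    · -- a ≥ 1 and b ≥ 1
      have ha1R : (1 : ℝ) ≤ A.card := by
        have : 1 ≤ A.card := Nat.one_le_iff_ne_zero.2 hA0
        exact_mod_cast this
      have hδ : 0 ≤ phiB lam W ({Sum.inr dstar, Sum.inl wstar} : Finset (V ⊕ Fin k))
          - phiB lam W ({Sum.inl wstar} : Finset (V ⊕ Fin k)) := by
        rw [hphiw, hphip]
        split_ifs <;> nlinarith
      have hpos : 0 < (t : ℝ) * ((1 - lam 2) * A.card * B.card) := by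
        have h1 : (0 : ℝ) < t := by linarith
        have h2 : (0 : ℝ) < (1 - lam 2) * A.card * B.card := by
          apply mul_pos (mul_pos h1mα (by linarith)) (by linarith)
        exact mul_pos h1 h2
      have hexp : (t : ℝ) * (((ν : ℝ) + k) * ((A.card : ℝ) + B.card)
          - (1 - lam 2) * A.card * B.card)
          = (k : ℝ) * ((ν : ℝ) + k) * t - (t : ℝ) * ((1 - lam 2) * A.card * B.card) := by
        rw [habR]; ring
      rw [hE']
      linarith [hbound, hexp ▸ hbound]
  refine ⟨hpart1, hpart2, ?_⟩
  -- Part 3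
  intro W hWcard hmax
  by_contra hne
  have hnonempty : (W ∩ (Finset.univ : Finset (Fin k)).image
      (Sum.inr : Fin k → V ⊕ Fin k)).Nonempty := Finset.nonempty_iff_ne_empty.2 hne
  have hlt := hpart2 W hWcard hnonempty
  have hcardSI : (I.image (Sum.inl : V → V ⊕ Fin k)).card = k := by
    rw [Finset.card_image_of_injective _ Sum.inl_injective, hIcard]
  have hge := hmax _ hcardSI
  linarith
end

section
/- For the constructed election E′: every committee W ⊆ C_𝒱 with |W| = k such that the corresponding vertex set {w ∈ 𝒱 : c_w ∈ W} is not an independent set of G satisfies λ-score^{E′}(W) ≤ k·(ν+k)·t − (1−α)·t. -/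
open Finset

variable {V : Type*}

/- auxiliary lemmas -/

lemma inl_mem_edgeBallot [DecidableEq V] (k : ℕ) (x : V) (e : Sym2 V) :
    Sum.inl x ∈ edgeBallot k e ↔ x ∈ e := by
  induction e using Sym2.ind with
  | _ u v => simp [edgeBallot, Sym2.mem_iff]

lemma sum_map_bind_replicate {α β γ : Type*} [AddCommMonoid γ] (s : Multiset β) (n : β → ℕ)
    (B : β → Finset α) (g : Finset α → γ) :
    ((s.bind fun x => Multiset.replicate (n x) (B x)).map g).sum
      = (s.map fun x => n x • g (B x)).sum := by
  rw [Multiset.map_bind, Multiset.sum_bind]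
  congr 1
  simp only [Multiset.map_replicate, Multiset.sum_replicate]

lemma cast_sum_map {X : Type*} (M : Multiset X) (f : X → ℕ) :
    ((M.map fun x => ((f x : ℝ))).sum) = (((M.map f).sum : ℕ) : ℝ) := by
  rw [Nat.cast_multiset_sum, Multiset.map_map]; rfl

lemma finset_sum_val {β : Type*} (s : Finset β) (f : β → ℕ) :
    (s.val.map f).sum = ∑ x ∈ s, f x := rfl

section main
variable [Fintype V] [DecidableEq V] (G : SimpleGraph V) [DecidableRel G.Adj]

lemma cardsum_E (k t : ℕ) (W : Finset (V ⊕ Fin k))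
    (hWsub : W ⊆ (Finset.univ : Finset V).image (Sum.inl : V → V ⊕ Fin k))
    (hWcard : W.card = k) :
    ((electionE G k t).map fun b => (W ∩ b).card).sum ≤ k * (Fintype.card V + k) * t := by
  classical
  set S : Finset V := univ.filter (fun w => Sum.inl w ∈ W) with hSdef
  have hinr : ∀ d : Fin k, Sum.inr d ∉ W := by
    intro d hd
    obtain ⟨w, -, hw⟩ := Finset.mem_image.1 (hWsub hd)
    exact Sum.inl_ne_inr hw
  have hW : W = S.image Sum.inl := by
    ext c
    constructor
    · intro hc
      obtain ⟨w, -, rfl⟩ := Finset.mem_image.1 (hWsub hc)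
      exact Finset.mem_image.2 ⟨w, Finset.mem_filter.2 ⟨Finset.mem_univ _, hc⟩, rfl⟩
    · intro hc
      obtain ⟨w, hw, rfl⟩ := Finset.mem_image.1 hc
      exact (Finset.mem_filter.1 hw).2
  have hScard : S.card = k := by
    rw [hW, Finset.card_image_of_injective _ Sum.inl_injective] at hWcard
    exact hWcard
  have hsingle : ∀ w : V, (W ∩ ({Sum.inl w} : Finset (V ⊕ Fin k))).card
      = if w ∈ S then 1 else 0 := by
    intro w
    by_cases hw : Sum.inl w ∈ W
    · rw [Finset.inter_singleton_of_mem hw]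
      simp [hSdef, hw]
    · rw [Finset.inter_singleton_of_notMem hw]
      simp [hSdef, hw]
  have hpair : ∀ (d : Fin k) (w : V),
      (W ∩ ({Sum.inr d, Sum.inl w} : Finset (V ⊕ Fin k))).card = if w ∈ S then 1 else 0 := by
    intro d w
    have h : W ∩ ({Sum.inr d, Sum.inl w} : Finset (V ⊕ Fin k)) = W ∩ {Sum.inl w} := by
      rw [Finset.inter_comm, Finset.insert_inter_of_notMem (hinr d), Finset.inter_comm]
    rw [h, hsingle]
  have hedge : ∀ e : Sym2 V,
      (W ∩ edgeBallot k e).card = (S.filter (fun x => x ∈ e)).card := by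
    intro e
    have h1 : W ∩ edgeBallot k e = (S.filter (fun x => x ∈ e)).image Sum.inl := by
      ext c
      induction e using Sym2.ind with
      | _ u v =>
        constructor
        · intro hc
          have hc1 := (Finset.mem_inter.1 hc).1
          have hc2 := (Finset.mem_inter.1 hc).2
          simp only [edgeBallot, Sym2.lift_mk, Finset.mem_insert, Finset.mem_singleton] at hc2
          rcases hc2 with rfl | rfl
          · exact Finset.mem_image.2 ⟨u, Finset.mem_filter.2
              ⟨Finset.mem_filter.2 ⟨Finset.mem_univ _, hc1⟩, by simp⟩, rfl⟩
          · exact Finset.mem_image.2 ⟨v, Finset.mem_filter.2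
              ⟨Finset.mem_filter.2 ⟨Finset.mem_univ _, hc1⟩, by simp⟩, rfl⟩
        · intro hc
          obtain ⟨x, hx, rfl⟩ := Finset.mem_image.1 hc
          have hx1 := (Finset.mem_filter.1 hx).1
          have hx2 := (Finset.mem_filter.1 hx).2
          refine Finset.mem_inter.2 ⟨(Finset.mem_filter.1 hx1).2, ?_⟩
          rw [inl_mem_edgeBallot]
          exact hx2
    rw [h1, Finset.card_image_of_injective _ Sum.inl_injective]
  have hdeg : ∀ w : V, G.degree w ≤ Fintype.card V := by
    intro w
    rw [← SimpleGraph.card_neighborFinset_eq_degree]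
    exact Finset.card_le_univ _
  -- split the election into its four parts
  rw [electionE, Multiset.map_add, Multiset.map_add, Multiset.map_add, Multiset.sum_add,
    Multiset.sum_add, Multiset.sum_add, sum_map_bind_replicate, sum_map_bind_replicate,
    sum_map_bind_replicate, sum_map_bind_replicate, finset_sum_val, finset_sum_val,
    finset_sum_val, finset_sum_val]
  -- part 1
  have hp1 : ∑ e ∈ G.edgeFinset, t • (W ∩ edgeBallot k e).card
      = ∑ x ∈ S, t * G.degree x := by
    calc ∑ e ∈ G.edgeFinset, t • (W ∩ edgeBallot k e).card
        = ∑ e ∈ G.edgeFinset, ∑ x ∈ S, (if x ∈ e then t else 0) := by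
          refine Finset.sum_congr rfl fun e _ => ?_
          rw [smul_eq_mul, hedge, ← Finset.sum_filter, Finset.sum_const, smul_eq_mul, mul_comm]
      _ = ∑ x ∈ S, ∑ e ∈ G.edgeFinset, (if x ∈ e then t else 0) := Finset.sum_comm
      _ = ∑ x ∈ S, t * G.degree x := by
          refine Finset.sum_congr rfl fun x _ => ?_
          rw [← Finset.sum_filter, Finset.sum_const, smul_eq_mul,
            ← SimpleGraph.incidenceFinset_eq_filter, SimpleGraph.card_incidenceFinset_eq_degree,
            mul_comm]
  -- part 2
  have hp2 : ∑ w : V, ((Fintype.card V - G.degree w) * t)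
        • (W ∩ ({Sum.inl w} : Finset (V ⊕ Fin k))).card
      = ∑ w ∈ S, (Fintype.card V - G.degree w) * t := by
    calc ∑ w : V, ((Fintype.card V - G.degree w) * t)
          • (W ∩ ({Sum.inl w} : Finset (V ⊕ Fin k))).card
        = ∑ w : V, (if w ∈ S then (Fintype.card V - G.degree w) * t else 0) := by
          refine Finset.sum_congr rfl fun w _ => ?_
          rw [hsingle w, smul_eq_mul]
          split <;> simp
      _ = ∑ w ∈ univ ∩ S, (Fintype.card V - G.degree w) * t := Finset.sum_ite_mem _ _ _
      _ = ∑ w ∈ S, (Fintype.card V - G.degree w) * t := by rw [Finset.univ_inter]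
  -- part 3
  have hp3 : ∑ p : Fin k × V, t • (W ∩ ({Sum.inr p.1, Sum.inl p.2} : Finset (V ⊕ Fin k))).card
      = k * k * t := by
    calc ∑ p : Fin k × V, t • (W ∩ ({Sum.inr p.1, Sum.inl p.2} : Finset (V ⊕ Fin k))).card
        = ∑ p : Fin k × V, (if p.2 ∈ S then t else 0) := by
          refine Finset.sum_congr rfl fun p _ => ?_
          rw [hpair p.1 p.2, smul_eq_mul]
          split <;> simp
      _ = ∑ d : Fin k, ∑ w : V, (if w ∈ S then t else 0) := Fintype.sum_prod_type _
      _ = ∑ d : Fin k, k * t := by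
          refine Finset.sum_congr rfl fun d _ => ?_
          rw [Finset.sum_ite_mem, Finset.univ_inter, Finset.sum_const, smul_eq_mul, hScard]
      _ = k * (k * t) := by rw [Finset.sum_const, smul_eq_mul, Finset.card_univ, Fintype.card_fin]
      _ = k * k * t := by ring
  -- part 4
  have hp4 : ∑ d : Fin k, (k * t) • (W ∩ ({Sum.inr d} : Finset (V ⊕ Fin k))).card = 0 := by
    refine Finset.sum_eq_zero fun d _ => ?_
    rw [Finset.inter_singleton_of_notMem (hinr d)]
    simp
  rw [hp1, hp2, hp3, hp4]
  have h12 : ∑ x ∈ S, t * G.degree x + ∑ w ∈ S, (Fintype.card V - G.degree w) * t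
      = k * (Fintype.card V * t) := by
    rw [← Finset.sum_add_distrib]
    have : ∀ w ∈ S, t * G.degree w + (Fintype.card V - G.degree w) * t
        = Fintype.card V * t := by
      intro w _
      have := hdeg w
      have h1 : t * G.degree w = G.degree w * t := mul_comm _ _
      rw [h1, ← Nat.add_mul]
      congr 1
      omega
    rw [Finset.sum_congr rfl this, Finset.sum_const, smul_eq_mul, hScard]
  rw [add_zero, h12]
  have : k * (Fintype.card V * t) + k * k * t = k * (Fintype.card V + k) * t := by ring
  rw [this]

end main

/-- In E′, every size-k committee of vertex candidates whose corresponding vertex set is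
not an independent set of G has λ-score at most `k·(ν+k)·t − (1−α)·t`. -/
theorem stmt3 [Fintype V] [DecidableEq V] (G : SimpleGraph V) [DecidableRel G.Adj]
    (k : ℕ) (hk : 1 ≤ k) (hV : 1 ≤ Fintype.card V)
    (lam : ℕ → ℝ) (hlam1 : lam 1 = 1)
    (hlam01 : ∀ i : ℕ, 1 ≤ i → lam i ∈ Set.Icc (0 : ℝ) 1)
    (hmono : ∀ i j : ℕ, 1 ≤ i → i ≤ j → lam j ≤ lam i)
    (hud : lam 2 < 1)
    (t : ℕ) (ht : t = ⌈(2 : ℝ) / (1 - lam 2)⌉₊)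
    (dstar : Fin k) (wstar : V)
    (W : Finset (V ⊕ Fin k))
    (hWsub : W ⊆ (Finset.univ : Finset V).image (Sum.inl : V → V ⊕ Fin k))
    (hWcard : W.card = k)
    (hnotindep : ¬ ∀ u w : V, Sum.inl u ∈ W → Sum.inl w ∈ W → u ≠ w → ¬ G.Adj u w) :
    lamScoreM lam (electionE' G k t dstar wstar) W ≤
      (k : ℝ) * ((Fintype.card V : ℝ) + k) * t - (1 - lam 2) * t := by
  classical
  have hα : (0 : ℝ) < 1 - lam 2 := by linarith
  have htpos : 0 < t := by
    rw [ht, Nat.ceil_pos]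
    positivity
  have hinr : ∀ d : Fin k, Sum.inr d ∉ W := by
    intro d hd
    obtain ⟨w, -, hw⟩ := Finset.mem_image.1 (hWsub hd)
    exact Sum.inl_ne_inr hw
  -- the deleted ballot
  have hBmem : ({Sum.inr dstar, Sum.inl wstar} : Finset (V ⊕ Fin k)) ∈ electionE G k t := by
    rw [electionE]
    refine Multiset.mem_add.2 (Or.inl (Multiset.mem_add.2 (Or.inr ?_)))
    rw [Multiset.mem_bind]
    exact ⟨(dstar, wstar), Finset.mem_univ _, Multiset.mem_replicate.2 ⟨htpos.ne', rfl⟩⟩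
  -- score of E' equals score of E
  have hE'score : lamScoreM lam (electionE' G k t dstar wstar) W
      = lamScoreM lam (electionE G k t) W := by
    unfold lamScoreM electionE'
    conv_rhs => rw [← Multiset.cons_erase hBmem]
    rw [Multiset.map_cons, Multiset.map_cons, Multiset.sum_cons, Multiset.sum_cons]
    have h : W ∩ ({Sum.inr dstar, Sum.inl wstar} : Finset (V ⊕ Fin k))
        = W ∩ {Sum.inl wstar} := by
      rw [Finset.inter_comm, Finset.insert_inter_of_notMem (hinr dstar), Finset.inter_comm]
    rw [h]
  rw [hE'score]
  -- the bad edge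
  push_neg at hnotindep
  obtain ⟨u, v, hu, hv, huv, hadj⟩ := hnotindep
  have he0 : s(u, v) ∈ G.edgeFinset.val := by
    rw [Finset.mem_val, SimpleGraph.mem_edgeFinset, SimpleGraph.mem_edgeSet]
    exact hadj
  have hR : electionE G k t = Multiset.replicate t (edgeBallot k s(u, v)) +
      (((G.edgeFinset.val.erase s(u, v)).bind fun e => Multiset.replicate t (edgeBallot k e))
       + (((Finset.univ : Finset V).val.bind fun w =>
            Multiset.replicate ((Fintype.card V - G.degree w) * t)
              ({Sum.inl w} : Finset (V ⊕ Fin k)))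
       + (((Finset.univ : Finset (Fin k × V)).val.bind fun p =>
            Multiset.replicate t ({Sum.inr p.1, Sum.inl p.2} : Finset (V ⊕ Fin k)))
       + ((Finset.univ : Finset (Fin k)).val.bind fun d =>
            Multiset.replicate (k * t) ({Sum.inr d} : Finset (V ⊕ Fin k)))))) := by
    conv_lhs => rw [electionE, ← Multiset.cons_erase he0, Multiset.cons_bind]
    simp only [add_assoc]
  set R := (((G.edgeFinset.val.erase s(u, v)).bind fun e =>
        Multiset.replicate t (edgeBallot k e))
       + (((Finset.univ : Finset V).val.bind fun w =>
            Multiset.replicate ((Fintype.card V - G.degree w) * t)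
              ({Sum.inl w} : Finset (V ⊕ Fin k)))
       + (((Finset.univ : Finset (Fin k × V)).val.bind fun p =>
            Multiset.replicate t ({Sum.inr p.1, Sum.inl p.2} : Finset (V ⊕ Fin k)))
       + ((Finset.univ : Finset (Fin k)).val.bind fun d =>
            Multiset.replicate (k * t) ({Sum.inr d} : Finset (V ⊕ Fin k)))))) with hRdef
  -- the bad-edge ballot meets W in two candidates
  have hB0card : (W ∩ edgeBallot k s(u, v)).card = 2 := by
    have heq : W ∩ edgeBallot k s(u, v) = {Sum.inl u, Sum.inl v} := by
      rw [show edgeBallot k s(u, v) = ({Sum.inl u, Sum.inl v} : Finset (V ⊕ Fin k)) from rfl,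
        Finset.inter_eq_right]
      intro c hc
      simp only [edgeBallot, Sym2.lift_mk, Finset.mem_insert, Finset.mem_singleton] at hc
      rcases hc with rfl | rfl
      · exact hu
      · exact hv
    rw [heq, Finset.card_insert_of_notMem (by simp [huv]), Finset.card_singleton]
  -- score of the bad-edge ballot
  have hB0score : (∑ j ∈ Finset.range ((W ∩ edgeBallot k s(u, v)).card), lam (j + 1))
      = 1 + lam 2 := by
    rw [hB0card, Finset.sum_range_succ, Finset.sum_range_succ, Finset.sum_range_zero, hlam1]
    ring
  -- split the score
  have hscore_split : lamScoreM lam (electionE G k t) W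
      = t * (1 + lam 2) + lamScoreM lam R W := by
    unfold lamScoreM
    rw [hR, Multiset.map_add, Multiset.sum_add, Multiset.map_replicate,
      Multiset.sum_replicate, hB0score, nsmul_eq_mul]
  -- score of R is at most its cardsum
  have hRle : lamScoreM lam R W ≤ (((R.map fun b => (W ∩ b).card).sum : ℕ) : ℝ) := by
    unfold lamScoreM
    rw [← cast_sum_map]
    refine Multiset.sum_map_le_sum_map _ _ fun b _ => ?_
    calc ∑ j ∈ Finset.range ((W ∩ b).card), lam (j + 1)
        ≤ ∑ j ∈ Finset.range ((W ∩ b).card), 1 := by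
          refine Finset.sum_le_sum fun j _ => ?_
          exact (hlam01 (j + 1) (by omega)).2
      _ = ((W ∩ b).card : ℝ) := by simp
  -- total cardsum bound
  have hcs := cardsum_E G k t W hWsub hWcard
  rw [hR, Multiset.map_add, Multiset.sum_add, Multiset.map_replicate, Multiset.sum_replicate,
    hB0card, smul_eq_mul] at hcs
  -- cast and conclude
  have hcsR : (t : ℝ) * 2 + (((R.map fun b => (W ∩ b).card).sum : ℕ) : ℝ)
      ≤ (k : ℝ) * ((Fintype.card V : ℝ) + k) * t := by
    have := (Nat.cast_le (α := ℝ)).2 hcs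
    push_cast at this
    convert this using 2 <;> push_cast <;> rfl
  rw [hscore_split]
  have htr : (0 : ℝ) ≤ t := Nat.cast_nonneg t
  nlinarith [hRle, hcsR]
end
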